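/- If G is a connected graph with non-increasing degree sequence d = (d_1, ..., d_n) and exactly n - 1 + k edges for some non-negative integer k, then γ(G) ≤ 3·sl(d) + 2k - 2. -/

import Mathlib

open Finset

/-- The degree of a vertex in a simple graph. -/
noncomputable def deg {V : Type*} (G : SimpleGraph V) (v : V) : ℕ := Nat.card {u // G.Adj v u}

/-- `D` is a dominating set of `G`. -/
def DomSet {V : Type*} (G : SimpleGraph V) (D : Set V) : Prop := ∀ v ∉ D, ∃ u ∈ D, G.Adj u v

/-- `S` is an independent set of `G`. -/
def IndepSet {V : Type*} (G : SimpleGraph V) (S : Set V) : Prop :=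
  ∀ u ∈ S, ∀ v ∈ S, ¬ G.Adj u v

/-- The domination number of `G`. -/
noncomputable def domNum {V : Type*} [Fintype V] (G : SimpleGraph V) : ℕ :=
  sInf {k | ∃ D : Finset V, D.card = k ∧ DomSet G ↑D}

/-- The independence number of `G`. -/
noncomputable def indepNum {V : Type*} [Fintype V] (G : SimpleGraph V) : ℕ :=
  sSup {k | ∃ S : Finset V, S.card = k ∧ IndepSet G ↑S}

/-- Sum of the first `k` entries `d_1 + ... + d_k` (0-indexed: indices `< k`). -/
def psum {n : ℕ} (d : Fin n → ℕ) (k : ℕ) : ℕ := ∑ i : Fin n, if (i : ℕ) < k then d i else 0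

/-- Sum of the remaining entries `d_{k+1} + ... + d_n` (0-indexed: indices `≥ k`). -/
def ssum {n : ℕ} (d : Fin n → ℕ) (k : ℕ) : ℕ := ∑ i : Fin n, if k ≤ (i : ℕ) then d i else 0

/-- Slater's bound `sl(d) = min{k ∈ [n] : d_1 + ... + d_k ≥ n - k}`. -/
noncomputable def slater (n : ℕ) (d : Fin n → ℕ) : ℕ := sInf {k | 1 ≤ k ∧ k ≤ n ∧ n - k ≤ psum d k}

/-- The annihilation number `a(d) = n - min{k ∈ [n] : Σ_{i≤k} d_i ≥ Σ_{i>k} d_i}`. -/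
noncomputable def annih (n : ℕ) (d : Fin n → ℕ) : ℕ := n - sInf {k | 1 ≤ k ∧ k ≤ n ∧ ssum d k ≤ psum d k}

/-- The number of entries of `d` equal to `j`. -/
def nCount {n : ℕ} (d : Fin n → ℕ) (j : ℕ) : ℕ := (Finset.univ.filter fun i => d i = j).card

/-- The number of entries of `d` that are at least `2`. -/
def nGe2 {n : ℕ} (d : Fin n → ℕ) : ℕ := (Finset.univ.filter fun i => 2 ≤ d i).card

/-- `F` is a forest realization of the degree sequence `d`. -/
def IsForestReal {n : ℕ} (d : Fin n → ℕ) (F : SimpleGraph (Fin n)) : Prop :=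
  F.IsAcyclic ∧ ∀ i, deg F i = d i

/-- The minimum domination number over all forest realizations of `d`. -/
noncomputable def gammaFmin {n : ℕ} (d : Fin n → ℕ) : ℕ :=
  sInf {m | ∃ F : SimpleGraph (Fin n), IsForestReal d F ∧ domNum F = m}

/-- The maximum independence number over all forest realizations of `d`. -/
noncomputable def alphaFmax {n : ℕ} (d : Fin n → ℕ) : ℕ :=
  sSup {m | ∃ F : SimpleGraph (Fin n), IsForestReal d F ∧ indepNum F = m}

/-!
Take for `S` the first `sl(d)` vertices, so that `n - |S| ≤ ∑_{v ∈ S} deg v`. The set `S`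
together with the vertices `U` having no neighbour in `S` dominates `G`. Fix a root in `S` and
send every other vertex to the edge joining it to a neighbour closer to the root; this is
injective, maps `V \ S` to edges not inside `S` and `U` to edges avoiding `S`. Counting edges by
their number of ends in `S` then gives `|U| ≤ 2 (m - n + |S|)`, i.e. `γ ≤ 3 |S| + 2 k - 2`.
-/

lemma Finset.card_filter_mem_add_le {V : Type*} [Fintype V] [DecidableEq V] (S : Finset V)
    (e : Sym2 V) :
    #(S.filter (· ∈ e)) + (if e ∈ Sᶜ.sym2 then 1 else 0) ≤ 1 + (if e ∈ S.sym2 then 1 else 0) := by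
  induction e with
  | _ a b =>
    by_cases ha : a ∈ S <;> by_cases hb : b ∈ S <;>
      simp [mem_sym2_iff, ha, hb, filter_or, filter_eq', card_le_two]

namespace SimpleGraph

variable {V : Type*} {G : SimpleGraph V}

lemma deg_eq_degree [Fintype V] [DecidableRel G.Adj] (v : V) : deg G v = G.degree v := by
  rw [deg, ← card_neighborSet_eq_degree, ← Nat.card_eq_fintype_card]
  rfl

lemma domNum_le_card [Fintype V] {D : Finset V} (hD : DomSet G D) : domNum G ≤ #D :=
  Nat.sInf_le ⟨D, rfl, hD⟩

lemma Connected.exists_adj_dist_lt (hG : G.Connected) {v r : V} (hne : v ≠ r) :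
    ∃ w, G.Adj v w ∧ G.dist w r < G.dist v r := by
  obtain ⟨p, hp⟩ := hG.exists_walk_length_eq_dist v r
  cases p with
  | nil => exact absurd rfl hne
  | cons h q =>
    refine ⟨_, h, ?_⟩
    have := dist_le q
    rw [Walk.length_cons] at hp
    omega

/-- Sending each `v ≠ r` to the edge towards a neighbour closer to `r` is injective. -/
lemma Connected.card_le_card_filter_edgeFinset [Fintype V] [DecidableRel G.Adj]
    (hG : G.Connected) {r : V} {T : Finset V} (hr : r ∉ T) (P : Sym2 V → Prop) [DecidablePred P]
    (hP : ∀ v ∈ T, ∀ w, G.Adj v w → P s(v, w)) : #T ≤ #(G.edgeFinset.filter P) := by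
  choose! p hp using fun v (hv : v ∈ T) => hG.exists_adj_dist_lt (ne_of_mem_of_not_mem hv hr)
  refine card_le_card_of_injOn (fun v => s(v, p v)) (fun v hv => ?_) (fun v hv w hw hvw => ?_)
  · exact mem_filter.2 ⟨mem_edgeFinset.2 (hp v hv).1, hP v hv _ (hp v hv).1⟩
  · rcases Sym2.eq_iff.1 hvw with ⟨h, -⟩ | ⟨hvpw, hwpv⟩
    · exact h
    · have hv' := (hp v hv).2
      have hw' := (hp w hw).2
      rw [hwpv] at hv'
      rw [← hvpw] at hw'
      omega

variable [Fintype V] [DecidableEq V] [DecidableRel G.Adj]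

lemma sum_degree_eq_sum_card_filter_mem (S : Finset V) :
    ∑ v ∈ S, G.degree v = ∑ e ∈ G.edgeFinset, #(S.filter (· ∈ e)) := by
  simp_rw [← card_incidenceFinset_eq_degree, incidenceFinset_eq_filter, card_filter]
  exact sum_comm

/-- An edge is counted twice in `∑ v ∈ S, deg v` only if it lies inside `S`, and not at all if it
avoids `S`. -/
lemma sum_degree_add_card_le (S : Finset V) :
    ∑ v ∈ S, G.degree v + #(G.edgeFinset.filter (· ∈ Sᶜ.sym2)) ≤
      #G.edgeFinset + #(G.edgeFinset.filter (· ∈ S.sym2)) := by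
  rw [sum_degree_eq_sum_card_filter_mem, card_filter, card_filter, card_eq_sum_ones G.edgeFinset,
    ← sum_add_distrib, ← sum_add_distrib]
  exact sum_le_sum fun e _ => card_filter_mem_add_le S e

variable (G) in
def undominated (S : Finset V) : Finset V := univ.filter fun v => v ∉ S ∧ ∀ u ∈ S, ¬ G.Adj u v

lemma domSet_union_undominated (S : Finset V) : DomSet G ↑(S ∪ G.undominated S) := by
  intro v hv
  simp only [coe_union, Set.mem_union, mem_coe, not_or, undominated, mem_filter, mem_univ,
    true_and, not_and, not_forall, not_not] at hv
  obtain ⟨u, hu, huv⟩ := hv.2 hv.1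
  exact ⟨u, mem_union_left _ hu, huv⟩

lemma card_compl_add_card_filter_mem_sym2_le (hG : G.Connected) {S : Finset V}
    (hS : S.Nonempty) : #Sᶜ + #(G.edgeFinset.filter (· ∈ S.sym2)) ≤ #G.edgeFinset := by
  obtain ⟨r, hr⟩ := hS
  have hcompl : #Sᶜ ≤ #(G.edgeFinset.filter (· ∉ S.sym2)) :=
    hG.card_le_card_filter_edgeFinset (notMem_compl.2 hr) _ fun v hv w _ h =>
      mem_compl.1 hv (mem_sym2_iff.1 h v (Sym2.mem_mk_left v w))
  have := card_filter_add_card_filter_not (s := G.edgeFinset) (· ∈ S.sym2)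
  omega

lemma card_undominated_le (hG : G.Connected) {S : Finset V} (hS : S.Nonempty) :
    #(G.undominated S) ≤ #(G.edgeFinset.filter (· ∈ Sᶜ.sym2)) := by
  obtain ⟨r, hr⟩ := hS
  refine hG.card_le_card_filter_edgeFinset (r := r) (fun h => (mem_filter.1 h).2.1 hr) _ ?_
  intro v hv w hvw
  simp only [undominated, mem_filter, mem_univ, true_and] at hv
  simp only [mem_sym2_iff, Sym2.mem_iff, mem_compl]
  rintro x (rfl | rfl)
  · exact hv.1
  · exact fun hx => hv.2 x hx hvw.symm

theorem domNum_add_two_mul_card_le (hG : G.Connected) {S : Finset V} (hS : S.Nonempty)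
    (hdeg : Fintype.card V ≤ #S + ∑ v ∈ S, G.degree v) :
    domNum G + 2 * Fintype.card V ≤ 3 * #S + 2 * #G.edgeFinset := by
  have hdom := (domNum_le_card (domSet_union_undominated (G := G) S)).trans (card_union_le _ _)
  have hinside := card_compl_add_card_filter_mem_sym2_le hG hS
  have houtside := card_undominated_le hG hS
  have hsum := sum_degree_add_card_le (G := G) S
  have hcompl := card_compl S
  have := S.card_le_univ
  omega

end SimpleGraph

open SimpleGraph in
theorem stmt7_general {n : ℕ} (d : Fin n → ℕ) (G : SimpleGraph (Fin n))
    (hconn : G.Connected) (hdeg : ∀ i, deg G i = d i) (k : ℕ)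
    (hm : G.edgeSet.ncard = n - 1 + k) :
    domNum G ≤ 3 * slater n d + 2 * k - 2 := by
  classical
  have hn : 0 < n := Fin.pos_iff_nonempty.2 hconn.nonempty
  obtain ⟨hs1, hsn, hslater⟩ : slater n d ∈ {j | 1 ≤ j ∧ j ≤ n ∧ n - j ≤ psum d j} :=
    Nat.sInf_mem ⟨n, hn, le_rfl, by simp⟩
  set s := slater n d
  set S : Finset (Fin n) := univ.filter fun i => (i : ℕ) < s
  have hS : #S = s := by rw [Fin.card_filter_val_lt]; omega
  have hSne : S.Nonempty := ⟨⟨0, hn⟩, mem_filter.2 ⟨mem_univ _, hs1⟩⟩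
  have hpsum : psum d s = ∑ i ∈ S, G.degree i := by
    simp only [psum, S, sum_filter, ← hdeg, deg_eq_degree]
  have hE : #G.edgeFinset = n - 1 + k := by
    rw [← hm, ← Set.ncard_coe_finset, coe_edgeFinset]
  have := domNum_add_two_mul_card_le hconn hSne (by rw [Fintype.card_fin]; omega)
  rw [Fintype.card_fin] at this
  omega

theorem stmt7 {n : ℕ} (d : Fin n → ℕ) (hd : Antitone d) (G : SimpleGraph (Fin n))
    (hconn : G.Connected) (hdeg : ∀ i, deg G i = d i) (k : ℕ)
    (hm : G.edgeSet.ncard = n - 1 + k) :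
    domNum G ≤ 3 * slater n d + 2 * k - 2 :=
  stmt7_general d G hconn hdeg k hm
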